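/- Let Λ ∈ ℝ^{r×r} be symmetric and let Ξ ∈ ℝ^{r×r} be symmetric positive semi-definite. If all eigenvalues of I + Ξ Λ are (real and) positive, then the continuous-time algebraic Riccati equation Λ = D^T + D + D Ξ D^T admits a symmetric solution D ∈ ℝ^{r×r}. -/

import Mathlib

/-!
Write `Ξ = S * S` with `S` symmetric and put `A = S Λ S`. For invertible `S` and symmetric `D`,
the equation becomes `E² + 2E = A` for `E = S D S`, solved by `E = √(1 + A) - 1 = A Y` with
`Y = (1 + √(1 + A))⁻¹`, the root of `Y² A + 2Y = 1`. The formula `D = ½ (Λ - Λ S Y² S Λ)` avoids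
`S⁻¹` and still solves the equation, because `1 - Y² A = 2Y`. Defining `Y` by the functional
calculus needs the spectrum of `A` to lie in `[-1, ∞)`: the nonzero eigenvalues of `A = (S Λ) S`
are those of `S (S Λ) = Ξ Λ`, and those of `1 + Ξ Λ` are positive by hypothesis.
-/

open Matrix

noncomputable def riccatiRoot (t : ℝ) : ℝ := (1 + √(1 + t))⁻¹

lemma continuous_riccatiRoot : Continuous riccatiRoot :=
  (continuous_const.add (continuous_const.add continuous_id).sqrt).inv₀
    fun _ => (add_pos_of_pos_of_nonneg one_pos (Real.sqrt_nonneg _)).ne'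

lemma riccatiRoot_mul_self_mul_add_two_mul {t : ℝ} (ht : -1 ≤ t) :
    riccatiRoot t * riccatiRoot t * t + 2 * riccatiRoot t = 1 := by
  have hs : √(1 + t) ^ 2 = 1 + t := Real.sq_sqrt (by linarith)
  have hpos : 0 < 1 + √(1 + t) := add_pos_of_pos_of_nonneg one_pos (Real.sqrt_nonneg _)
  rw [riccatiRoot]
  field_simp
  linear_combination -hs

theorem IsSelfAdjoint.exists_mul_self_mul_add_two_smul_eq_one {A : Type*} [Ring A] [StarRing A]
    [TopologicalSpace A] [Algebra ℝ A] [ContinuousFunctionalCalculus ℝ A IsSelfAdjoint]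
    {a : A} (ha : IsSelfAdjoint a) (hspec : ∀ t ∈ spectrum ℝ a, -1 ≤ t) :
    ∃ y : A, IsSelfAdjoint y ∧ y * y * a + 2 • y = 1 := by
  have hcont := continuous_riccatiRoot.continuousOn (s := spectrum ℝ a)
  refine ⟨cfc riccatiRoot a, cfc_predicate _ a, ?_⟩
  calc cfc riccatiRoot a * cfc riccatiRoot a * a + 2 • cfc riccatiRoot a
      = cfc (fun t => riccatiRoot t * riccatiRoot t * t + 2 • riccatiRoot t) a := by
        rw [cfc_add .., cfc_mul .., cfc_mul .., cfc_id' ℝ a, cfc_smul ..]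
    _ = cfc (fun _ => (1 : ℝ)) a := cfc_congr fun t ht => by
        simpa using riccatiRoot_mul_self_mul_add_two_mul (hspec t ht)
    _ = 1 := cfc_const_one ℝ a

theorem Matrix.algebraMap_mem_spectrum_map_iff {K L n : Type*} [Field K] [Field L] [Algebra K L]
    [Fintype n] [DecidableEq n] (M : Matrix n n K) (t : K) :
    algebraMap K L t ∈ spectrum L (M.map (algebraMap K L)) ↔ t ∈ spectrum K M := by
  rw [mem_spectrum_iff_isRoot_charpoly, mem_spectrum_iff_isRoot_charpoly, charpoly_map,
    Polynomial.IsRoot, Polynomial.IsRoot, Polynomial.eval_map_algebraMap,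
    Polynomial.aeval_algebraMap_apply, map_eq_zero_iff _ (algebraMap K L).injective,
    Polynomial.coe_aeval_eq_eval]

theorem spectrum.one_add_mem_of_mem_mul_comm {R A : Type*} [Field R] [Ring A] [Algebra R A]
    {a b : A} {t : R} (ht : t ∈ spectrum R (a * b)) (ht0 : t ≠ 0) :
    1 + t ∈ spectrum R (1 + b * a) := by
  have ht' : t ∈ spectrum R (a * b) \ {0} := ⟨ht, ht0⟩
  rw [spectrum.nonzero_mul_comm] at ht'
  rw [← map_one (algebraMap R A), ← spectrum.singleton_add_eq]
  exact Set.add_mem_add rfl ht'.1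

theorem Matrix.riccati_of_mul_self_mul_add_two_smul_eq_one {n K : Type*} [Fintype n]
    [DecidableEq n] [CommRing K] [Invertible (2 : K)] {Λ S Y : Matrix n n K}
    (hΛ : Λᵀ = Λ) (hS : Sᵀ = S) (hY : Yᵀ = Y) (h : Y * Y * (S * Λ * S) + 2 • Y = 1) :
    let D := (⅟2 : K) • (Λ - Λ * S * (Y * Y) * S * Λ)
    Dᵀ = D ∧ Λ = Dᵀ + D + D * (S * S) * Dᵀ := by
  intro D
  have hD : Dᵀ = D := by
    simp only [D, transpose_smul, transpose_sub, transpose_mul, hΛ, hS, hY, Matrix.mul_assoc]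
  have hleft : 1 - Y * Y * (S * Λ * S) = 2 • Y := by rw [← h]; abel
  have hright : 1 - S * Λ * S * (Y * Y) = 2 • Y := by
    simpa only [transpose_sub, transpose_one, transpose_mul, transpose_smul, hΛ, hS, hY,
      Matrix.mul_assoc] using congrArg transpose hleft
  have hquad : D * (S * S) * D = Λ * S * (Y * Y) * S * Λ := by
    calc D * (S * S) * D
        = (⅟2 * ⅟2 : K) • ((Λ * S * (1 - Y * Y * (S * Λ * S)))
            * ((1 - S * Λ * S * (Y * Y)) * S * Λ)) := by
          simp only [D, Matrix.smul_mul, Matrix.mul_smul, smul_smul]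
          congr 1
          noncomm_ring
      _ = (⅟2 * ⅟2 * 2 * 2 : K) • (Λ * S * (Y * Y) * S * Λ) := by
          rw [hleft, hright]
          simp only [Matrix.smul_mul, Matrix.mul_smul, smul_smul, ← Nat.cast_smul_eq_nsmul K]
          congr 1
          · push_cast; ring
          · noncomm_ring
      _ = Λ * S * (Y * Y) * S * Λ := by
          rw [show (⅟2 * ⅟2 * 2 * 2 : K) = 1 by simp, one_smul]
  refine ⟨hD, ?_⟩
  rw [hD, hquad, ← two_smul K D]
  simp only [D, smul_smul, mul_invOf_self, one_smul, sub_add_cancel]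

/-- for symmetric `Λ ∈ ℝ^{r×r}` and symmetric positive semi-definite
`Ξ ∈ ℝ^{r×r}`, if all eigenvalues of `I + Ξ Λ` are (real and) positive, then the
continuous-time algebraic Riccati equation `Λ = Dᵀ + D + D Ξ Dᵀ` admits a symmetric
solution `D ∈ ℝ^{r×r}`.  (Eigenvalues are taken as the spectrum of the complexification
of `I + Ξ Λ`.) -/
theorem riccati_symmetric_solution {r : ℕ}
    (Λ Ξ : Matrix (Fin r) (Fin r) ℝ)
    (hΛ : Λᵀ = Λ) (hΞ : Ξ.PosSemidef)
    (heig : ∀ μ ∈ spectrum ℂ ((1 + Ξ * Λ).map (algebraMap ℝ ℂ)), μ.im = 0 ∧ 0 < μ.re) :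
    ∃ D : Matrix (Fin r) (Fin r) ℝ, Dᵀ = D ∧ Λ = Dᵀ + D + D * Ξ * Dᵀ := by
  open scoped MatrixOrder in
  obtain ⟨S, hS, rfl⟩ : ∃ S : Matrix (Fin r) (Fin r) ℝ, Sᵀ = S ∧ S * S = Ξ :=
    ⟨CFC.sqrt Ξ, (CFC.sqrt_nonneg Ξ).isSelfAdjoint, CFC.sqrt_mul_sqrt_self Ξ hΞ.nonneg⟩
  have hA : IsSelfAdjoint (S * Λ * S) := by
    simp only [IsSelfAdjoint, star_eq_conjTranspose, conjTranspose_eq_transpose_of_trivial,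
      transpose_mul, hS, hΛ, Matrix.mul_assoc]
  have hspec : ∀ t ∈ spectrum ℝ (S * Λ * S), -1 ≤ t := by
    intro t ht
    rcases eq_or_ne t 0 with rfl | ht0
    · norm_num
    have h1t := spectrum.one_add_mem_of_mem_mul_comm ht ht0
    rw [← Matrix.mul_assoc, ← algebraMap_mem_spectrum_map_iff (L := ℂ)] at h1t
    have := (heig _ h1t).2
    rw [Complex.coe_algebraMap, Complex.ofReal_re] at this
    linarith
  obtain ⟨Y, hY, hYA⟩ := hA.exists_mul_self_mul_add_two_smul_eq_one hspec
  exact ⟨_, riccati_of_mul_self_mul_add_two_smul_eq_one hΛ hS hY hYA⟩
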